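/- Let T, n, p ∈ ℕ, Xᵗ ∈ ℝ^{n×p}, Yᵗ ∈ ℝⁿ for t = 1,…,T, M ∈ ℝ^{p×p}, and λ ≥ 0, μ ≥ 0, ε > 0, γ > 0. Then the MTW loss L(θ₊, θ₋, P₁, P₂, θ̄₊, θ̄₋) = Σ_{t=1}^T [ (1/(2n))‖Xᵗ(θ₊ᵗ − θ₋ᵗ) − Yᵗ‖₂² + (λ/T)·Σ_{i=1}^p (θ₊ᵢᵗ + θ₋ᵢᵗ) + (μ/T)·( G(P₁ᵗ, θ₊ᵗ, θ̄₊) + G(P₂ᵗ, θ₋ᵗ, θ̄₋) ) ], where G(P, θ₁, θ₂) = ⟨P, M⟩ + ε·Σ_{i,j} P_{ij}(log P_{ij} − 1) + γ·kl(P𝟙, θ₁) + γ·kl(Pᵀ𝟙, θ₂), is jointly convex in all of its variables on the domain where all entries of θ₊ᵗ, θ₋ᵗ ∈ (0,∞)^p, P₁ᵗ, P₂ᵗ ∈ (0,∞)^{p×p}, and θ̄₊, θ̄₋ ∈ (0,∞)^p are positive. -/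

import Mathlib

open scoped BigOperators

/-- Generalized Kullback–Leibler divergence on positive vectors:
`kl (x, y) = ∑ i, x i * log (x i / y i) + y i - x i`. -/
noncomputable def genKL {p : ℕ} (x y : Fin p → ℝ) : ℝ :=
  ∑ i, (x i * Real.log (x i / y i) + y i - x i)

/-- Unbalanced entropic OT functional:
`G (P, θ₁, θ₂) = ⟨P, M⟩ + ε ∑ P_{ij} (log P_{ij} - 1) + γ kl(P𝟙, θ₁) + γ kl(Pᵀ𝟙, θ₂)`. -/
noncomputable def unbalancedOT {p q : ℕ} (M : Matrix (Fin p) (Fin q) ℝ) (ε γ : ℝ)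
    (P : Matrix (Fin p) (Fin q) ℝ) (θ₁ : Fin p → ℝ) (θ₂ : Fin q → ℝ) : ℝ :=
  (∑ i, ∑ j, P i j * M i j)
    + ε * ∑ i, ∑ j, P i j * (Real.log (P i j) - 1)
    + γ * genKL (fun i => ∑ j, P i j) θ₁
    + γ * genKL (fun j => ∑ i, P i j) θ₂

/-- The MTW loss, as a function of
`(θ₊, θ₋, P₁, P₂, θ̄₊, θ̄₋)`:
`L = ∑ t, (1/(2n)) ‖Xᵗ(θ₊ᵗ - θ₋ᵗ) - Yᵗ‖₂² + (λ/T) ∑ i (θ₊ᵢᵗ + θ₋ᵢᵗ)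
      + (μ/T) (G(P₁ᵗ, θ₊ᵗ, θ̄₊) + G(P₂ᵗ, θ₋ᵗ, θ̄₋))`. -/
noncomputable def mtwLoss {T n p : ℕ} (X : Fin T → Matrix (Fin n) (Fin p) ℝ)
    (Y : Fin T → Fin n → ℝ) (M : Matrix (Fin p) (Fin p) ℝ) (lam μ ε γ : ℝ)
    (v : (Fin T → Fin p → ℝ) × (Fin T → Fin p → ℝ) ×
          (Fin T → Matrix (Fin p) (Fin p) ℝ) × (Fin T → Matrix (Fin p) (Fin p) ℝ) ×
          (Fin p → ℝ) × (Fin p → ℝ)) : ℝ :=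
  let θp := v.1; let θm := v.2.1; let P₁ := v.2.2.1; let P₂ := v.2.2.2.1
  let θbp := v.2.2.2.2.1; let θbm := v.2.2.2.2.2
  ∑ t, ((1 / (2 * (n : ℝ))) *
        ∑ i, ((X t).mulVec (fun j => θp t j - θm t j) i - Y t i) ^ 2
      + (lam / (T : ℝ)) * ∑ i, (θp t i + θm t i)
      + (μ / (T : ℝ)) *
          (unbalancedOT M ε γ (P₁ t) (θp t) θbp +
            unbalancedOT M ε γ (P₂ t) (θm t) θbm))


open Real Set InformationTheory

/-! Every summand of the MTW loss is a nonnegative multiple of a convex function of a linear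
image of the variables. The least-squares term is a convex quadratic, the `ℓ¹` and transport-cost
terms are linear and the entropy is a sum of the convex functions `x ↦ x (log x - 1)`. The only
genuinely joint term is the generalized KL divergence: its summand `x log (x / y) + y - x` equals
`y φ (x / y)` for the convex function `φ x = x log x + 1 - x`, and perspectives `y φ (x / y)` of
convex functions are jointly convex in `(x, y)`. -/

section Convexity

variable {𝕜 E F β : Type*} [Semiring 𝕜] [PartialOrder 𝕜] [AddCommMonoid E] [AddCommMonoid F]
  [AddCommMonoid β] [PartialOrder β] {s : Set E}

theorem ConvexOn.finset_sum [IsOrderedAddMonoid β] [SMul 𝕜 E] [Module 𝕜 β] {ι : Type*}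
    {t : Finset ι} {f : ι → E → β} (hs : Convex 𝕜 s) (hf : ∀ i ∈ t, ConvexOn 𝕜 s (f i)) :
    ConvexOn 𝕜 s fun x => ∑ i ∈ t, f i x := by
  rw [← Finset.sum_fn]
  exact Finset.sum_induction f (ConvexOn 𝕜 s) (fun _ _ => ConvexOn.add)
    (convexOn_const (0 : β) hs : ConvexOn 𝕜 s 0) hf

theorem ConvexOn.comp_isLinearMap [Module 𝕜 E] [Module 𝕜 F] [SMul 𝕜 β] {t : Set F} {f : F → β}
    {g : E → F} (hf : ConvexOn 𝕜 t f) (hg : IsLinearMap 𝕜 g) (hs : Convex 𝕜 s)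
    (hst : MapsTo g s t) : ConvexOn 𝕜 s fun x => f (g x) :=
  (hf.comp_linearMap (hg.mk' g)).subset hst hs

theorem IsLinearMap.convexOn [Module 𝕜 E] [Module 𝕜 β] {g : E → β} (hg : IsLinearMap 𝕜 g)
    (hs : Convex 𝕜 s) : ConvexOn 𝕜 s g :=
  (hg.mk' g).convexOn hs

end Convexity

theorem ConvexOn.perspective {E : Type*} [AddCommGroup E] [Module ℝ E] {s : Set E} {f : E → ℝ}
    (hf : ConvexOn ℝ s f) :
    ConvexOn ℝ {z : E × ℝ | 0 < z.2 ∧ z.2⁻¹ • z.1 ∈ s} fun z => z.2 * f (z.2⁻¹ • z.1) := by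
  let D := {z : E × ℝ | 0 < z.2 ∧ z.2⁻¹ • z.1 ∈ s}
  let F := fun z : E × ℝ => z.2 * f (z.2⁻¹ • z.1)
  suffices h : ∀ ⦃z⦄, z ∈ D → ∀ ⦃w⦄, w ∈ D → ∀ ⦃a b : ℝ⦄, 0 ≤ a → 0 ≤ b → a + b = 1 →
      a • z + b • w ∈ D ∧ F (a • z + b • w) ≤ a • F z + b • F w from
    ⟨fun _ hz _ hw _ _ ha hb hab => (h hz hw ha hb hab).1,
      fun _ hz _ hw _ _ ha hb hab => (h hz hw ha hb hab).2⟩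
  rintro ⟨x₁, y₁⟩ ⟨hy₁, hx₁⟩ ⟨x₂, y₂⟩ ⟨hy₂, hx₂⟩ a b ha hb hab
  simp only [D, F, Prod.smul_mk, Prod.mk_add_mk, smul_eq_mul] at *
  have hY : 0 < a * y₁ + b * y₂ := convex_Ioi (0 : ℝ) hy₁ hy₂ ha hb hab
  set Y := a * y₁ + b * y₂
  have hα : 0 ≤ a * y₁ / Y := by positivity
  have hβ : 0 ≤ b * y₂ / Y := by positivity
  have hαβ : a * y₁ / Y + b * y₂ / Y = 1 := by rw [← add_div, div_self hY.ne']
  have hcomb : Y⁻¹ • (a • x₁ + b • x₂) =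
      (a * y₁ / Y) • (y₁⁻¹ • x₁) + (b * y₂ / Y) • (y₂⁻¹ • x₂) := by
    simp only [smul_add, smul_smul]
    congr 2 <;> field_simp
  refine ⟨⟨hY, hcomb ▸ hf.1 hx₁ hx₂ hα hβ hαβ⟩, ?_⟩
  calc Y * f (Y⁻¹ • (a • x₁ + b • x₂))
      ≤ Y * ((a * y₁ / Y) * f (y₁⁻¹ • x₁) + (b * y₂ / Y) * f (y₂⁻¹ • x₂)) := by
        rw [hcomb]; exact mul_le_mul_of_nonneg_left (hf.2 hx₁ hx₂ hα hβ hαβ) hY.le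
    _ = a * (y₁ * f (y₁⁻¹ • x₁)) + b * (y₂ * f (y₂⁻¹ • x₂)) := by field_simp

theorem convexOn_mul_log_div_add_sub :
    ConvexOn ℝ (Ici 0 ×ˢ Ioi 0) fun z : ℝ × ℝ => z.1 * log (z.1 / z.2) + z.2 - z.1 := by
  refine (convexOn_klFun.perspective.subset ?_ ((convex_Ici 0).prod (convex_Ioi 0))).congr ?_
  · rintro ⟨x, y⟩ ⟨hx : 0 ≤ x, hy : 0 < y⟩
    exact ⟨hy, smul_nonneg (inv_nonneg.2 hy.le) hx⟩
  · rintro ⟨x, y⟩ ⟨-, hy : 0 < y⟩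
    simp only [klFun, smul_eq_mul]
    field_simp

theorem convexOn_genKL (p : ℕ) :
    ConvexOn ℝ {z : (Fin p → ℝ) × (Fin p → ℝ) | (∀ i, 0 ≤ z.1 i) ∧ ∀ i, 0 < z.2 i}
      fun z => genKL z.1 z.2 := by
  have hs : Convex ℝ {z : (Fin p → ℝ) × (Fin p → ℝ) | (∀ i, 0 ≤ z.1 i) ∧ ∀ i, 0 < z.2 i} :=
    fun _ hx _ hy a b ha hb hab =>
      ⟨fun i => convex_Ici (0 : ℝ) (hx.1 i) (hy.1 i) ha hb hab,
        fun i => convex_Ioi (0 : ℝ) (hx.2 i) (hy.2 i) ha hb hab⟩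
  exact ConvexOn.finset_sum hs fun i _ => convexOn_mul_log_div_add_sub.comp_isLinearMap
    (g := fun z : (Fin p → ℝ) × (Fin p → ℝ) => (z.1 i, z.2 i)) ⟨fun _ _ => rfl, fun _ _ => rfl⟩
    hs fun _ hz => ⟨hz.1 i, hz.2 i⟩

abbrev UOTParams (p q : ℕ) : Type := Matrix (Fin p) (Fin q) ℝ × (Fin p → ℝ) × (Fin q → ℝ)

theorem convexOn_unbalancedOT {p q : ℕ} (M : Matrix (Fin p) (Fin q) ℝ) {ε γ : ℝ} (hε : 0 ≤ ε)
    (hγ : 0 ≤ γ) :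
    ConvexOn ℝ {w : UOTParams p q | (∀ i j, 0 ≤ w.1 i j) ∧ (∀ i, 0 < w.2.1 i) ∧ ∀ j, 0 < w.2.2 j}
      fun w => unbalancedOT M ε γ w.1 w.2.1 w.2.2 := by
  have hs : Convex ℝ
      {w : UOTParams p q | (∀ i j, 0 ≤ w.1 i j) ∧ (∀ i, 0 < w.2.1 i) ∧ ∀ j, 0 < w.2.2 j} :=
    fun _ hx _ hy a b ha hb hab =>
      ⟨fun i j => convex_Ici (0 : ℝ) (hx.1 i j) (hy.1 i j) ha hb hab,
        fun i => convex_Ioi (0 : ℝ) (hx.2.1 i) (hy.2.1 i) ha hb hab,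
        fun j => convex_Ioi (0 : ℝ) (hx.2.2 j) (hy.2.2 j) ha hb hab⟩
  have cost : IsLinearMap ℝ fun w : UOTParams p q => ∑ i, ∑ j, w.1 i j * M i j :=
    ⟨fun x y => by simp only [Prod.fst_add, Matrix.add_apply, add_mul, Finset.sum_add_distrib],
      fun c x => by
        simp only [Prod.smul_fst, Matrix.smul_apply, smul_eq_mul, mul_assoc, Finset.mul_sum]⟩
  have entropy : ConvexOn ℝ (Ici 0) fun x : ℝ => x * (log x - 1) :=
    (Real.convexOn_mul_log.sub (concaveOn_id (convex_Ici 0))).congr fun x _ => by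
      simp only [Pi.sub_apply, id]; ring
  have rowSums : IsLinearMap ℝ fun w : UOTParams p q => ((fun i => ∑ j, w.1 i j), w.2.1) :=
    ⟨fun _ _ => Prod.ext (funext fun _ => by simp [Finset.sum_add_distrib]) rfl,
      fun _ _ => Prod.ext (funext fun _ => by simp [Finset.mul_sum]) rfl⟩
  have colSums : IsLinearMap ℝ fun w : UOTParams p q => ((fun j => ∑ i, w.1 i j), w.2.2) :=
    ⟨fun _ _ => Prod.ext (funext fun _ => by simp [Finset.sum_add_distrib]) rfl,
      fun _ _ => Prod.ext (funext fun _ => by simp [Finset.mul_sum]) rfl⟩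
  refine (((cost.convexOn hs).add (ConvexOn.smul hε ?_)).add (ConvexOn.smul hγ ?_)).add
    (ConvexOn.smul hγ ?_)
  · exact ConvexOn.finset_sum hs fun i _ => ConvexOn.finset_sum hs fun j _ =>
      entropy.comp_isLinearMap (g := fun w : UOTParams p q => w.1 i j)
        ⟨fun _ _ => rfl, fun _ _ => rfl⟩ hs fun _ hw => hw.1 i j
  · exact (convexOn_genKL p).comp_isLinearMap rowSums hs fun w hw =>
      ⟨fun i => show 0 ≤ ∑ j, w.1 i j from Finset.sum_nonneg fun j _ => hw.1 i j, hw.2.1⟩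
  · exact (convexOn_genKL q).comp_isLinearMap colSums hs fun w hw =>
      ⟨fun j => show 0 ≤ ∑ i, w.1 i j from Finset.sum_nonneg fun i _ => hw.1 i j, hw.2.2⟩

theorem convexOn_sub_sq (c : ℝ) : ConvexOn ℝ univ fun x : ℝ => (x - c) ^ 2 := by
  simpa [Function.comp_def, neg_add_eq_sub] using
    (even_two.convexOn_pow (𝕜 := ℝ)).translate_right (-c)

theorem convexOn_sum_sq_sub {E ι : Type*} [AddCommGroup E] [Module ℝ E] [Fintype ι] {s : Set E}
    {g : E → ι → ℝ} (hg : IsLinearMap ℝ g) (y : ι → ℝ) (hs : Convex ℝ s) :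
    ConvexOn ℝ s fun x => ∑ i, (g x i - y i) ^ 2 :=
  ConvexOn.finset_sum hs fun i _ => (convexOn_sub_sq (y i)).comp_isLinearMap
    (g := fun x => g x i) ⟨fun x x' => congrFun (hg.map_add x x') i,
      fun c x => congrFun (hg.map_smul c x) i⟩ hs (mapsTo_univ _ _)

abbrev MTWParams (T p : ℕ) : Type :=
  (Fin T → Fin p → ℝ) × (Fin T → Fin p → ℝ) ×
    (Fin T → Matrix (Fin p) (Fin p) ℝ) × (Fin T → Matrix (Fin p) (Fin p) ℝ) ×
    (Fin p → ℝ) × (Fin p → ℝ)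

def mtwDomain (T p : ℕ) : Set (MTWParams T p) :=
  {v | (∀ t i, 0 < v.1 t i) ∧ (∀ t i, 0 < v.2.1 t i) ∧
    (∀ t i j, 0 < v.2.2.1 t i j) ∧ (∀ t i j, 0 < v.2.2.2.1 t i j) ∧
    (∀ i, 0 < v.2.2.2.2.1 i) ∧ (∀ i, 0 < v.2.2.2.2.2 i)}

theorem convex_mtwDomain (T p : ℕ) : Convex ℝ (mtwDomain T p) :=
  fun _ hx _ hy a b ha hb hab =>
    have pos {u w : ℝ} (hu : 0 < u) (hw : 0 < w) : 0 < a * u + b * w :=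
      convex_Ioi (0 : ℝ) hu hw ha hb hab
    ⟨fun t i => pos (hx.1 t i) (hy.1 t i), fun t i => pos (hx.2.1 t i) (hy.2.1 t i),
      fun t i j => pos (hx.2.2.1 t i j) (hy.2.2.1 t i j),
      fun t i j => pos (hx.2.2.2.1 t i j) (hy.2.2.2.1 t i j),
      fun i => pos (hx.2.2.2.2.1 i) (hy.2.2.2.2.1 i),
      fun i => pos (hx.2.2.2.2.2 i) (hy.2.2.2.2.2 i)⟩

theorem mtwLoss_jointly_convex_general {T n p : ℕ} (X : Fin T → Matrix (Fin n) (Fin p) ℝ)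
    (Y : Fin T → Fin n → ℝ) (M : Matrix (Fin p) (Fin p) ℝ) (lam μ ε γ : ℝ)
    (hμ : 0 ≤ μ) (hε : 0 < ε) (hγ : 0 < γ) :
    ConvexOn ℝ
      {v : (Fin T → Fin p → ℝ) × (Fin T → Fin p → ℝ) ×
            (Fin T → Matrix (Fin p) (Fin p) ℝ) × (Fin T → Matrix (Fin p) (Fin p) ℝ) ×
            (Fin p → ℝ) × (Fin p → ℝ) |
        (∀ t i, 0 < v.1 t i) ∧ (∀ t i, 0 < v.2.1 t i) ∧
        (∀ t i j, 0 < v.2.2.1 t i j) ∧ (∀ t i j, 0 < v.2.2.2.1 t i j) ∧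
        (∀ i, 0 < v.2.2.2.2.1 i) ∧ (∀ i, 0 < v.2.2.2.2.2 i)}
      (mtwLoss X Y M lam μ ε γ) := by
  have hS := convex_mtwDomain T p
  have residual (t : Fin T) :
      IsLinearMap ℝ fun v : MTWParams T p => (X t).mulVec (v.1 t - v.2.1 t) :=
    ⟨fun x y => by
        simp only [Prod.fst_add, Prod.snd_add, Pi.add_apply, add_sub_add_comm, Matrix.mulVec_add],
      fun c x => by
        simp only [Prod.smul_fst, Prod.smul_snd, Pi.smul_apply, ← smul_sub, Matrix.mulVec_smul]⟩
  have lasso (t : Fin T) :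
      IsLinearMap ℝ fun v : MTWParams T p => lam / T * ∑ i, (v.1 t i + v.2.1 t i) :=
    ⟨fun x y => by simp only [Prod.fst_add, Prod.snd_add, Pi.add_apply, add_add_add_comm,
        Finset.sum_add_distrib, mul_add],
      fun c x => by simp only [Prod.smul_fst, Prod.smul_snd, Pi.smul_apply, smul_eq_mul,
        ← mul_add, ← Finset.mul_sum, mul_left_comm]⟩
  have hG := convexOn_unbalancedOT M hε.le hγ.le
  refine ConvexOn.finset_sum hS fun t _ => (ConvexOn.add ?_ ?_).add ?_
  · exact (convexOn_sum_sq_sub (residual t) (Y t) hS).smul (by positivity)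
  · exact (lasso t).convexOn hS
  · refine (ConvexOn.add ?_ ?_).smul (div_nonneg hμ T.cast_nonneg)
    · exact hG.comp_isLinearMap (g := fun v : MTWParams T p => (v.2.2.1 t, v.1 t, v.2.2.2.2.1))
        ⟨fun _ _ => rfl, fun _ _ => rfl⟩ hS fun _ hv =>
          ⟨fun i j => (hv.2.2.1 t i j).le, hv.1 t, hv.2.2.2.2.1⟩
    · exact hG.comp_isLinearMap (g := fun v : MTWParams T p => (v.2.2.2.1 t, v.2.1 t, v.2.2.2.2.2))
        ⟨fun _ _ => rfl, fun _ _ => rfl⟩ hS fun _ hv =>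
          ⟨fun i j => (hv.2.2.2.1 t i j).le, hv.2.1 t, hv.2.2.2.2.2⟩

/-- The MTW loss is jointly convex in all of its variables
`(θ₊, θ₋, P₁, P₂, θ̄₊, θ̄₋)` on the domain where all entries are positive. -/
theorem mtwLoss_jointly_convex {T n p : ℕ} (X : Fin T → Matrix (Fin n) (Fin p) ℝ)
    (Y : Fin T → Fin n → ℝ) (M : Matrix (Fin p) (Fin p) ℝ) (lam μ ε γ : ℝ)
    (hlam : 0 ≤ lam) (hμ : 0 ≤ μ) (hε : 0 < ε) (hγ : 0 < γ) :
    ConvexOn ℝ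
      {v : (Fin T → Fin p → ℝ) × (Fin T → Fin p → ℝ) ×
            (Fin T → Matrix (Fin p) (Fin p) ℝ) × (Fin T → Matrix (Fin p) (Fin p) ℝ) ×
            (Fin p → ℝ) × (Fin p → ℝ) |
        (∀ t i, 0 < v.1 t i) ∧ (∀ t i, 0 < v.2.1 t i) ∧
        (∀ t i j, 0 < v.2.2.1 t i j) ∧ (∀ t i j, 0 < v.2.2.2.1 t i j) ∧
        (∀ i, 0 < v.2.2.2.2.1 i) ∧ (∀ i, 0 < v.2.2.2.2.2 i)}
      (mtwLoss X Y M lam μ ε γ) :=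
  mtwLoss_jointly_convex_general X Y M lam μ ε γ hμ hε hγ
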